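/- The single-tier coverage probability with handoff cost, P_c(v,λ,β,τ,α) = (1−β)/(1+ρ) + β·(1/π)∫₀^π ∫₀^∞ e^{−πλr²ρ}·e^{−λ(v²(π−θ)+rva(θ))}·2πλr·e^{−πλr²} dr dθ, equals (1/(1+ρ))·{(1−β) + β·(1/π)∫₀^π [1 − 2b'√π·e^{b'²}·Q(√2 b')]·e^{−λv²(π−θ)} dθ}, where b' = (va(θ)/(2π))·√(πλ/(1+ρ)). -/

import Mathlib

/-!
For fixed `θ` the radial integrand is `e^{-λv²(π-θ)}/(1+ρ)` times `2cr·e^{-(cr² + dr)}` with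
`c = πλ(1+ρ)` and `d = λ v a(θ)`. Writing `d = √(2c)·x`, completing the square gives
`cr² + dr = (√(2c)·r + x)²/2 - x²/2`, and the substitution `t = √(2c)·r + x` turns the radial
integral into `e^{x²/2} ∫ₓ^∞ (t - x) e^{-t²/2} dt = 1 - x e^{x²/2} ∫ₓ^∞ e^{-t²/2} dt`.
With `x = √2·b'` the last integral is `√(2π)·Q(√2·b')`.
-/

open Real MeasureTheory Set Filter Topology

section ChangeOfVariables

variable {E : Type*} [NormedAddCommGroup E] [NormedSpace ℝ E]

theorem integral_comp_add_right_Ioi (g : ℝ → E) (a d : ℝ) :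
    ∫ x in Ioi a, g (x + d) = ∫ x in Ioi (a + d), g x := by
  have h := (measurePreserving_add_right (volume : Measure ℝ) d).setIntegral_preimage_emb
    (measurableEmbedding_addRight d) g (Ioi (a + d))
  rwa [preimage_add_const_Ioi, add_sub_cancel_right] at h

theorem integral_comp_mul_add_Ioi (g : ℝ → E) (a d : ℝ) {b : ℝ} (hb : 0 < b) :
    ∫ x in Ioi a, g (b * x + d) = b⁻¹ • ∫ x in Ioi (b * a + d), g x := by
  rw [integral_comp_mul_left_Ioi (fun y => g (y + d)) a hb, integral_comp_add_right_Ioi]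

end ChangeOfVariables

section GaussianTail

theorem integrable_exp_neg_sq_div_two : Integrable (fun t : ℝ => exp (-t ^ 2 / 2)) := by
  simpa [neg_div, div_eq_inv_mul, mul_comm] using
    integrable_exp_neg_mul_sq (b := (1 / 2 : ℝ)) (by norm_num)

theorem integrable_mul_exp_neg_sq_div_two : Integrable (fun t : ℝ => t * exp (-t ^ 2 / 2)) := by
  simpa [neg_div, div_eq_inv_mul, mul_comm] using
    integrable_mul_exp_neg_mul_sq (b := (1 / 2 : ℝ)) (by norm_num)

theorem integral_Ioi_mul_exp_neg_sq_div_two (x : ℝ) :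
    ∫ t in Ioi x, t * exp (-t ^ 2 / 2) = exp (-x ^ 2 / 2) := by
  have hderiv : ∀ t ∈ Ici x, HasDerivAt (fun u => -exp (-u ^ 2 / 2)) (t * exp (-t ^ 2 / 2)) t :=
    fun t _ => (((hasDerivAt_pow 2 t).fun_neg.div_const 2).exp).fun_neg.congr_deriv
      (by norm_num; ring)
  have hlim : Tendsto (fun u : ℝ => -exp (-u ^ 2 / 2)) atTop (𝓝 0) := by
    have hsq : Tendsto (fun u : ℝ => -u ^ 2 / 2) atTop atBot :=
      (tendsto_neg_atTop_atBot.comp (tendsto_pow_atTop two_ne_zero)).atBot_div_const two_pos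
    simpa using (tendsto_exp_atBot.comp hsq).neg
  rw [integral_Ioi_of_hasDerivAt_of_tendsto' hderiv
    integrable_mul_exp_neg_sq_div_two.integrableOn hlim, zero_sub, neg_neg]

theorem integral_Ioi_sub_mul_exp_neg_sq_div_two (x : ℝ) :
    ∫ t in Ioi x, (t - x) * exp (-t ^ 2 / 2)
      = exp (-x ^ 2 / 2) - x * ∫ t in Ioi x, exp (-t ^ 2 / 2) := by
  simp_rw [sub_mul]
  rw [integral_sub integrable_mul_exp_neg_sq_div_two.integrableOn
    (integrable_exp_neg_sq_div_two.const_mul x).integrableOn, integral_const_mul,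
    integral_Ioi_mul_exp_neg_sq_div_two]

theorem integral_Ioi_zero_mul_exp_neg_quadratic {c : ℝ} (hc : 0 < c) (x : ℝ) :
    ∫ r in Ioi (0 : ℝ), 2 * c * r * exp (-(c * r ^ 2 + √(2 * c) * x * r))
      = 1 - x * exp (x ^ 2 / 2) * ∫ t in Ioi x, exp (-t ^ 2 / 2) := by
  set k := √(2 * c)
  have hk : 0 < k := sqrt_pos.mpr (by positivity)
  have hk2 : k ^ 2 = 2 * c := sq_sqrt (by positivity)
  have hsquare : ∀ r, 2 * c * r * exp (-(c * r ^ 2 + k * x * r))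
      = exp (x ^ 2 / 2) * k * (((k * r + x) - x) * exp (-(k * r + x) ^ 2 / 2)) := by
    intro r
    have hexp : exp (-(c * r ^ 2 + k * x * r)) = exp (x ^ 2 / 2) * exp (-(k * r + x) ^ 2 / 2) := by
      rw [← exp_add]
      congr 1
      linear_combination (r ^ 2 / 2) * hk2
    rw [hexp]
    linear_combination (-(r * exp (x ^ 2 / 2) * exp (-(k * r + x) ^ 2 / 2))) * hk2
  have hsub := integral_comp_mul_add_Ioi (fun t => (t - x) * exp (-t ^ 2 / 2)) 0 x hk
  simp only [mul_zero, zero_add, smul_eq_mul] at hsub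
  have hcancel : exp (x ^ 2 / 2) * exp (-x ^ 2 / 2) = 1 := by
    rw [← exp_add, neg_div, add_neg_cancel, exp_zero]
  simp_rw [hsquare]
  rw [integral_const_mul, hsub, integral_Ioi_sub_mul_exp_neg_sq_div_two, ← mul_assoc, mul_assoc _ k, mul_inv_cancel₀ hk.ne', mul_one]
  linear_combination hcancel

end GaussianTail

theorem two_mul_sqrt_pi_mul_exp_sq_mul_inv_sqrt_two_pi (b I : ℝ) :
    2 * b * √π * exp (b ^ 2) * ((√(2 * π))⁻¹ * I) = √2 * b * exp ((√2 * b) ^ 2 / 2) * I := by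
  rw [mul_pow, sq_sqrt zero_le_two, sqrt_mul zero_le_two, mul_div_cancel_left₀ _ two_ne_zero]
  field_simp
  rw [sq_sqrt zero_le_two]
  ring

theorem integral_Ioi_coverage_integrand {lam ρ : ℝ} (hlam : 0 < lam) (hρ : 0 < 1 + ρ)
    (p v A b : ℝ) (hb : b = v * A / (2 * π) * √(π * lam / (1 + ρ))) :
    ∫ r in Ioi (0 : ℝ), exp (-(π * lam * r ^ 2 * ρ)) * exp (-(lam * (p + r * v * A)))
        * (2 * π * lam * r) * exp (-(π * lam * r ^ 2))
      = exp (-(lam * p)) / (1 + ρ)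
          * (1 - √2 * b * exp ((√2 * b) ^ 2 / 2) * ∫ t in Ioi (√2 * b), exp (-t ^ 2 / 2)) := by
  set c := π * lam * (1 + ρ)
  have hc : 0 < c := by positivity
  have hsqrt : √(2 * c) * √2 * √(π * lam / (1 + ρ)) = 2 * (π * lam) := by
    rw [← sqrt_mul (by positivity), ← sqrt_mul (by positivity),
      show 2 * c * 2 * (π * lam / (1 + ρ)) = (2 * (π * lam)) ^ 2 by simp only [c]; field_simp,
      sqrt_sq (by positivity)]
  have hb' : lam * v * A = √(2 * c) * (√2 * b) := by
    rw [hb, show √(2 * c) * (√2 * (v * A / (2 * π) * √(π * lam / (1 + ρ))))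
      = v * A / (2 * π) * (√(2 * c) * √2 * √(π * lam / (1 + ρ))) by ring, hsqrt]
    field_simp
  have hfactor : ∀ r : ℝ, exp (-(π * lam * r ^ 2 * ρ)) * exp (-(lam * (p + r * v * A)))
        * (2 * π * lam * r) * exp (-(π * lam * r ^ 2))
      = exp (-(lam * p)) / (1 + ρ)
          * (2 * c * r * exp (-(c * r ^ 2 + √(2 * c) * (√2 * b) * r))) := by
    intro r
    have hexp : exp (-(π * lam * r ^ 2 * ρ)) * exp (-(lam * (p + r * v * A)))
          * exp (-(π * lam * r ^ 2))
        = exp (-(lam * p)) * exp (-(c * r ^ 2 + lam * v * A * r)) := by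
      simp only [← exp_add, c]
      congr 1
      ring
    rw [← hb', div_mul_eq_mul_div, eq_div_iff hρ.ne']
    linear_combination (2 * π * lam * r * (1 + ρ)) * hexp
  simp_rw [hfactor]
  rw [integral_const_mul, integral_Ioi_zero_mul_exp_neg_quadratic hc]

theorem stmt8_general (lam v β ρ : ℝ) (hlam : 0 < lam)
    (hρ : 0 < ρ)
    (Q : ℝ → ℝ)
    (hQ : ∀ x, Q x = (Real.sqrt (2*π))⁻¹ * ∫ t in Set.Ioi x, Real.exp (-t^2/2))
    (a : ℝ → ℝ)
    (b' : ℝ → ℝ) (hb' : ∀ θ, b' θ = (v * a θ)/(2*π) * Real.sqrt (π*lam/(1+ρ))) :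
    (1 - β)/(1 + ρ) + β * ((1/π) * ∫ θ in (0:ℝ)..π, (∫ r in Set.Ioi (0:ℝ),
        Real.exp (-(π*lam*r^2*ρ)) * Real.exp (-(lam*(v^2*(π - θ) + r*v*(a θ))))
          * (2*π*lam*r) * Real.exp (-(π*lam*r^2))))
      = (1/(1+ρ)) * ((1 - β) + β * ((1/π) * ∫ θ in (0:ℝ)..π,
          (1 - 2*(b' θ)*Real.sqrt π * Real.exp ((b' θ)^2) * Q (Real.sqrt 2 * b' θ))
            * Real.exp (-(lam*v^2*(π - θ))))) := by
  have h1ρ : 0 < 1 + ρ := by linarith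
  have hinner : ∀ θ ∈ uIcc 0 π, ∫ r in Ioi (0 : ℝ), exp (-(π * lam * r ^ 2 * ρ))
        * exp (-(lam * (v ^ 2 * (π - θ) + r * v * a θ))) * (2 * π * lam * r) * exp (-(π * lam * r ^ 2))
      = 1 / (1 + ρ) * ((1 - 2 * b' θ * √π * exp (b' θ ^ 2) * Q (√2 * b' θ))
          * exp (-(lam * v ^ 2 * (π - θ)))) := by
    intro θ _
    rw [integral_Ioi_coverage_integrand hlam h1ρ _ v (a θ) _ (hb' θ), hQ,
      two_mul_sqrt_pi_mul_exp_sq_mul_inv_sqrt_two_pi, mul_assoc lam]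
    ring
  rw [intervalIntegral.integral_congr hinner, intervalIntegral.integral_const_mul]
  ring

theorem stmt8 (lam v β ρ : ℝ) (hlam : 0 < lam) (hv : 0 ≤ v)
    (hβ : β ∈ Set.Icc (0:ℝ) 1) (hρ : 0 < ρ)
    (Q : ℝ → ℝ)
    (hQ : ∀ x, Q x = (Real.sqrt (2*π))⁻¹ * ∫ t in Set.Ioi x, Real.exp (-t^2/2))
    (a : ℝ → ℝ) (ha : ∀ θ, a θ = 2*Real.cos θ*(π - θ) + Real.sin θ)
    (b' : ℝ → ℝ) (hb' : ∀ θ, b' θ = (v * a θ)/(2*π) * Real.sqrt (π*lam/(1+ρ))) :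
    (1 - β)/(1 + ρ) + β * ((1/π) * ∫ θ in (0:ℝ)..π, (∫ r in Set.Ioi (0:ℝ),
        Real.exp (-(π*lam*r^2*ρ)) * Real.exp (-(lam*(v^2*(π - θ) + r*v*(a θ))))
          * (2*π*lam*r) * Real.exp (-(π*lam*r^2))))
      = (1/(1+ρ)) * ((1 - β) + β * ((1/π) * ∫ θ in (0:ℝ)..π,
          (1 - 2*(b' θ)*Real.sqrt π * Real.exp ((b' θ)^2) * Q (Real.sqrt 2 * b' θ))
            * Real.exp (-(lam*v^2*(π - θ))))) :=
  stmt8_general lam v β ρ hlam hρ Q hQ a b' hb'
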